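/- arXiv:2404.00428 — 2 statements merged into one kernel-verified Lean document; each statement's English description precedes it below -/
import Mathlib

section
/- Let S : ℝ → ℝ be strictly monotone and continuous, and let D denote the S-derivative operator. If a, b, c, r are real numbers with a·r² + b·r + c = 0, then the function ψ(x) = exp(r·S(x)) satisfies a·D²ψ(x) + b·Dψ(x) + c·ψ(x) = 0 at every x, where D²ψ denotes the S-derivative of Dψ. -/
open Filter Topology Real

/-- The S-derivative (fractal F^α-derivative with staircase function S):
`f` has S-derivative `d` at `x` iff `(f y - f x)/(S y - S x) → d` as `y → x`, `y ≠ x`. -/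
def HasSDerivAt (S f : ℝ → ℝ) (d x : ℝ) : Prop :=
  Tendsto (fun y => (f y - f x) / (S y - S x)) (𝓝[≠] x) (𝓝 d)

theorem ContinuousAt.tendsto_nhdsNE_of_injective {X Y : Type*} [TopologicalSpace X]
    [TopologicalSpace Y] {f : X → Y} {x : X} (hf : ContinuousAt f x)
    (hinj : Function.Injective f) : Tendsto f (𝓝[≠] x) (𝓝[≠] (f x)) :=
  tendsto_nhdsWithin_of_tendsto_nhds_of_eventually_within _ (hf.mono_left nhdsWithin_le_nhds)
    (eventually_nhdsWithin_of_forall fun _ hy => hinj.ne hy)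

theorem HasDerivAt.hasSDerivAt_comp {S g : ℝ → ℝ} {g' x : ℝ} (hg : HasDerivAt g g' (S x))
    (hS : Function.Injective S) (hSc : ContinuousAt S x) :
    HasSDerivAt S (fun y => g (S y)) g' x := by
  have h := (hasDerivAt_iff_tendsto_slope.mp hg).comp (hSc.tendsto_nhdsNE_of_injective hS)
  simpa only [HasSDerivAt, Function.comp_def, slope_def_field] using h

theorem hasSDerivAt_const_mul_exp_mul {S : ℝ → ℝ} {x : ℝ} (hS : Function.Injective S)
    (hSc : ContinuousAt S x) (k r : ℝ) :
    HasSDerivAt S (fun y => k * exp (r * S y)) (k * r * exp (r * S x)) x := by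
  have hg : HasDerivAt (fun z => k * exp (r * z)) (k * r * exp (r * S x)) (S x) := by
    simpa [mul_comm, mul_assoc, mul_left_comm] using
      (((hasDerivAt_id (S x)).const_mul r).exp).const_mul k
  exact hg.hasSDerivAt_comp hS hSc

theorem stmt_2 (S : ℝ → ℝ) (hS : StrictMono S) (hSc : Continuous S)
    (a b c r : ℝ) (hr : a * r ^ 2 + b * r + c = 0) :
    ∃ ψ' ψ'' : ℝ → ℝ,
      (∀ x, HasSDerivAt S (fun y => Real.exp (r * S y)) (ψ' x) x) ∧
      (∀ x, HasSDerivAt S ψ' (ψ'' x) x) ∧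
      (∀ x, a * ψ'' x + b * ψ' x + c * Real.exp (r * S x) = 0) := by
  refine ⟨fun x => r * exp (r * S x), fun x => r ^ 2 * exp (r * S x),
    fun x => ?_, fun x => ?_, fun x => ?_⟩
  · simpa using hasSDerivAt_const_mul_exp_mul hS.injective hSc.continuousAt 1 r
  · simpa [pow_two] using hasSDerivAt_const_mul_exp_mul hS.injective hSc.continuousAt r r
  · linear_combination exp (r * S x) * hr
end

section
/- Let g, h : ℝ → ℝ be differentiable with g' = h and h' = -a₁h - a₂g, set ‖ψ(t)‖² = g(t)² + h(t)², and k = 1 + |a₁| + |a₂|. Then for all t and t₀: ‖ψ(t₀)‖·exp(-k|t - t₀|) ≤ ‖ψ(t)‖ ≤ ‖ψ(t₀)‖·exp(k|t - t₀|). -/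
/-!
The energy `u = g² + h²` satisfies `|u'| ≤ 2k u`, so `u(t) e^{-2kt}` is antitone, and so is the
same expression for the time-reversed `t ↦ u(-t)`. Together these give
`u(t) ≤ u(t₀) e^{2k|t - t₀|}`, and taking square roots yields the upper bound. The lower bound
is the upper bound with `t` and `t₀` exchanged.
-/

open Real

theorem le_mul_exp_of_deriv_le {u : ℝ → ℝ} {c : ℝ} (hu : Differentiable ℝ u)
    (hu' : ∀ t, deriv u t ≤ c * u t) {t₀ t : ℝ} (ht : t₀ ≤ t) :
    u t ≤ u t₀ * exp (c * (t - t₀)) := by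
  have hder : ∀ s, HasDerivAt (fun s ↦ u s * exp (-(c * s)))
      (exp (-(c * s)) * (deriv u s - c * u s)) s := fun s ↦
    ((hu s).hasDerivAt.fun_mul ((hasDerivAt_id' s).const_mul c).fun_neg.exp).congr_deriv (by ring)
  have hanti : Antitone fun s ↦ u s * exp (-(c * s)) :=
    antitone_of_deriv_nonpos (fun s ↦ (hder s).differentiableAt) fun s ↦ by
      rw [(hder s).deriv]
      exact mul_nonpos_of_nonneg_of_nonpos (exp_pos _).le (sub_nonpos.2 (hu' s))
  have := hanti ht
  calc u t = u t * exp (-(c * t)) * exp (c * t) := by rw [mul_assoc, ← exp_add]; simp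
    _ ≤ u t₀ * exp (-(c * t₀)) * exp (c * t) := by gcongr
    _ = u t₀ * exp (c * (t - t₀)) := by rw [mul_assoc, ← exp_add]; ring_nf

theorem le_mul_exp_abs_of_abs_deriv_le {u : ℝ → ℝ} {c : ℝ} (hu : Differentiable ℝ u)
    (hu' : ∀ t, |deriv u t| ≤ c * u t) (t t₀ : ℝ) :
    u t ≤ u t₀ * exp (c * |t - t₀|) := by
  rcases le_total t₀ t with ht | ht
  · rw [abs_of_nonneg (sub_nonneg.2 ht)]
    exact le_mul_exp_of_deriv_le hu (fun s ↦ (le_abs_self _).trans (hu' s)) ht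
  · have hrev := le_mul_exp_of_deriv_le (u := fun s ↦ u (-s)) (c := c)
      (hu.comp differentiable_neg) (fun s ↦ by
        rw [deriv_comp_neg]; exact (neg_le_abs _).trans (hu' _)) (neg_le_neg ht)
    simp only [neg_neg] at hrev
    rw [abs_of_nonpos (sub_nonpos.2 ht)]
    convert hrev using 3
    ring

theorem sqrt_le_sqrt_mul_exp_abs_of_abs_deriv_le {u : ℝ → ℝ} {k : ℝ} (hu : Differentiable ℝ u)
    (hu' : ∀ t, |deriv u t| ≤ 2 * k * u t) (t t₀ : ℝ) :
    √(u t) ≤ √(u t₀) * exp (k * |t - t₀|) :=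
  calc √(u t) ≤ √(u t₀ * exp (2 * k * |t - t₀|)) :=
        sqrt_le_sqrt (le_mul_exp_abs_of_abs_deriv_le hu hu' t t₀)
    _ = √(u t₀) * exp (k * |t - t₀|) := by
        rw [sqrt_mul' _ (exp_pos _).le, ← exp_half]; ring_nf

theorem abs_two_mul_le_sq_add_sq (x y : ℝ) : |2 * x * y| ≤ x ^ 2 + y ^ 2 := by
  simpa [abs_mul, sq_abs] using two_mul_le_add_sq |x| |y|

theorem abs_deriv_sq_add_sq_le (a₁ a₂ x y : ℝ) :
    |2 * x * y + 2 * y * (-a₁ * y - a₂ * x)| ≤ 2 * (1 + |a₁| + |a₂|) * (x ^ 2 + y ^ 2) := by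
  have hxy := abs_two_mul_le_sq_add_sq x y
  calc |2 * x * y + 2 * y * (-a₁ * y - a₂ * x)|
        = |2 * x * y - a₁ * (2 * y ^ 2) - a₂ * (2 * x * y)| := by ring_nf
    _ ≤ |2 * x * y| + |a₁ * (2 * y ^ 2)| + |a₂ * (2 * x * y)| :=
        (abs_sub _ _).trans (by gcongr; exact abs_sub _ _)
    _ = |2 * x * y| + |a₁| * (2 * y ^ 2) + |a₂| * |2 * x * y| := by
        rw [abs_mul a₁, abs_mul a₂, abs_of_nonneg (by positivity : (0 : ℝ) ≤ 2 * y ^ 2)]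
    _ ≤ 2 * (1 + |a₁| + |a₂|) * (x ^ 2 + y ^ 2) := by
        nlinarith [abs_nonneg a₁, abs_nonneg a₂, sq_nonneg x]

theorem stmt_10 (a₁ a₂ : ℝ) (g h : ℝ → ℝ)
    (hg : Differentiable ℝ g) (hh : Differentiable ℝ h)
    (hgh : ∀ t, deriv g t = h t)
    (hh' : ∀ t, deriv h t = -a₁ * h t - a₂ * g t)
    (k : ℝ) (hk : k = 1 + |a₁| + |a₂|) :
    ∀ t t₀ : ℝ,
      Real.sqrt (g t₀ ^ 2 + h t₀ ^ 2) * Real.exp (-k * |t - t₀|)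
        ≤ Real.sqrt (g t ^ 2 + h t ^ 2) ∧
      Real.sqrt (g t ^ 2 + h t ^ 2)
        ≤ Real.sqrt (g t₀ ^ 2 + h t₀ ^ 2) * Real.exp (k * |t - t₀|) := by
  have hu : ∀ t, HasDerivAt (fun s ↦ g s ^ 2 + h s ^ 2)
      (2 * g t * h t + 2 * h t * (-a₁ * h t - a₂ * g t)) t := fun t ↦ by
    have hgt := (hg t).hasDerivAt
    have hht := (hh t).hasDerivAt
    rw [hgh] at hgt
    rw [hh'] at hht
    exact ((hgt.pow 2).add (hht.pow 2)).congr_deriv (by push_cast; ring)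
  have key := sqrt_le_sqrt_mul_exp_abs_of_abs_deriv_le (fun t ↦ (hu t).differentiableAt)
    (fun t ↦ (hu t).deriv ▸ hk ▸ abs_deriv_sq_add_sq_le a₁ a₂ (g t) (h t))
  intro t t₀
  refine ⟨?_, key t t₀⟩
  calc √(g t₀ ^ 2 + h t₀ ^ 2) * exp (-k * |t - t₀|)
      ≤ √(g t ^ 2 + h t ^ 2) * exp (k * |t₀ - t|) * exp (-k * |t - t₀|) := by
        gcongr; exact key t₀ t
    _ = √(g t ^ 2 + h t ^ 2) := by rw [abs_sub_comm, mul_assoc, ← exp_add]; simp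
end
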